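/- Let A be a weighted directed graph on n vertices that is weakly connected with total edge weight W = ∑ i, ∑ j, A i j > 0. Then the forward democracy coefficient satisfies η_f(A) ≥ 0, and η_f(A) = 0 if and only if A is simply forward influenced. -/

import Mathlib

open Matrix BigOperators

noncomputable section

variable {n : ℕ}

/-- Weighted in-degree vector. -/
def indeg (A : Matrix (Fin n) (Fin n) ℝ) (j : Fin n) : ℝ := ∑ i, A i j

/-- Weighted out-degree vector. -/
def outdeg (A : Matrix (Fin n) (Fin n) ℝ) (i : Fin n) : ℝ := ∑ j, A i j

/-- Weighted in-degree Laplacian `L = diag d - A`. -/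
def inLap (A : Matrix (Fin n) (Fin n) ℝ) : Matrix (Fin n) (Fin n) ℝ :=
  Matrix.diagonal (indeg A) - A

/-- Reachability: reflexive-transitive closure of the edge relation. -/
def Reaches (A : Matrix (Fin n) (Fin n) ℝ) : Fin n → Fin n → Prop :=
  Relation.ReflTransGen fun i j => 0 < A i j

/-- Weak connectivity. -/
def WeaklyConnected (A : Matrix (Fin n) (Fin n) ℝ) : Prop :=
  ∀ i j : Fin n, Relation.ReflTransGen (fun i j => 0 < A i j ∨ 0 < A j i) i j

/-- Strong connectivity. -/
def StronglyConnected (A : Matrix (Fin n) (Fin n) ℝ) : Prop :=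
  ∀ i j : Fin n, Reaches A i j

/-- Simply forward influenced graph. -/
def SimplyForwardInfluenced (A : Matrix (Fin n) (Fin n) ℝ) : Prop :=
  (∃ i, indeg A i = 0) ∧ (∃ i, indeg A i ≠ 0) ∧
    ∀ j, indeg A j ≠ 0 → ∃ i, indeg A i = 0 ∧ Reaches A i j

/-- A set of vertices with no incoming edges from outside. -/
def InClosed (A : Matrix (Fin n) (Fin n) ℝ) (S : Finset (Fin n)) : Prop :=
  ∀ i j : Fin n, i ∉ S → j ∈ S → A i j = 0

/-- Minimal source subgraph. -/
def MinSourceSubgraph (A : Matrix (Fin n) (Fin n) ℝ) (S : Finset (Fin n)) : Prop :=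
  S.Nonempty ∧ InClosed A S ∧ ∀ T ⊆ S, T.Nonempty → T ≠ S → ¬ InClosed A T

/-- Total edge weight. -/
def totalWeight (A : Matrix (Fin n) (Fin n) ℝ) : ℝ := ∑ i, ∑ j, A i j

/-- `g` is a forward hierarchical level vector: a minimizer of `‖Lᵀ x - d‖₂`. -/
def IsFHL (A : Matrix (Fin n) (Fin n) ℝ) (g : Fin n → ℝ) : Prop :=
  ∀ x : Fin n → ℝ,
    ∑ i, ((inLap A)ᵀ.mulVec g i - indeg A i) ^ 2 ≤
      ∑ i, ((inLap A)ᵀ.mulVec x i - indeg A i) ^ 2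

/-- Forward democracy coefficient, computed from a forward hierarchical level vector `g`. -/
def etaF (A : Matrix (Fin n) (Fin n) ℝ) (g : Fin n → ℝ) : ℝ :=
  1 - (∑ i, ∑ j, A i j * (g j - g i)) / totalWeight A

/-- Forward influence centrality of a vertex, from a forward hierarchical level vector `g`. -/
def vF (A : Matrix (Fin n) (Fin n) ℝ) (g : Fin n → ℝ) (i : Fin n) : ℝ :=
  if indeg A i = 0 then 1 else 1 - (∑ k, A k i * (g i - g k)) / indeg A i

/-- `b` is the orthogonal projection of `d` onto `ker L` (standard Euclidean inner product). -/
def IsProjKerL (A : Matrix (Fin n) (Fin n) ℝ) (b : Fin n → ℝ) : Prop :=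
  (inLap A).mulVec b = 0 ∧
    ∀ x : Fin n → ℝ, (inLap A).mulVec x = 0 → ∑ i, (indeg A i - b i) * x i = 0

/-!
The residual `b = d - Lᵀ g` of a least-squares solution is the orthogonal projection of `d` onto
`ker L`, and `η_f = (∑ b) / W`. Since `L` has zero column sums and nonpositive off-diagonal
entries, `L |x| ≤ 0` entrywise with total `0` for every `x ∈ ker L`, so `ker L` is closed under
`|·|`; hence the projection of the nonnegative vector `d` is nonnegative, `η_f ≥ 0`, and
`η_f = 0` iff `b = 0` iff `d ⊥ ker L`.

If `d ⊥ ker L`, the set of vertices unreachable from sources has no incoming edges, so if it were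
nonempty, the principal submatrix of `L` on it would have zero column sums and give a nonzero
kernel vector `x` of `L` supported there; `⟪d, |x|⟫ = 0` then puts a source in its support.
Conversely, a nonnegative kernel vector is positive upstream of every vertex where it is positive,
so it vanishes at every non-source reachable from a source; under simple forward influence this
gives `‖b‖² = ⟪d, b⟫ = 0`.
-/

section LeastSquares

variable {m k : Type*} [Fintype m] [Fintype k]

theorem Matrix.transpose_mulVec_residual_eq_zero (M : Matrix m k ℝ) (d : m → ℝ) (g : k → ℝ)
    (hg : ∀ x, ∑ i, (M *ᵥ g - d) i ^ 2 ≤ ∑ i, (M *ᵥ x - d) i ^ 2) :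
    Mᵀ *ᵥ (M *ᵥ g - d) = 0 := by
  set e := M *ᵥ g - d
  have horth : ∀ y, e ⬝ᵥ M *ᵥ y = 0 := by
    intro y
    set w := M *ᵥ y
    have hquad : ∀ t : ℝ, 0 ≤ (w ⬝ᵥ w) * (t * t) + 2 * (e ⬝ᵥ w) * t + 0 := by
      intro t
      have hexp : ∑ i, (M *ᵥ (g + t • y) - d) i ^ 2
          = ∑ i, e i ^ 2 + ((w ⬝ᵥ w) * (t * t) + 2 * (e ⬝ᵥ w) * t) := by
        simp only [dotProduct, Finset.sum_mul, Finset.mul_sum, ← Finset.sum_add_distrib]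
        refine Finset.sum_congr rfl fun i _ => ?_
        simp only [mulVec_add, mulVec_smul, Pi.add_apply, Pi.sub_apply, Pi.smul_apply,
          smul_eq_mul, e, w]
        ring
      linarith [hg (g + t • y)]
    have := discrim_le_zero hquad
    rw [discrim] at this
    nlinarith [sq_nonneg (e ⬝ᵥ w)]
  have := horth (Mᵀ *ᵥ e)
  rwa [dotProduct_mulVec, ← mulVec_transpose, dotProduct_self_eq_zero] at this

end LeastSquares

theorem nonneg_of_sub_orthogonal {ι : Type*} [Fintype ι] {K : Set (ι → ℝ)}
    (hK : ∀ x ∈ K, |x| ∈ K) {d r : ι → ℝ} (hd : 0 ≤ d) (hr : r ∈ K)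
    (horth : ∀ x ∈ K, (d - r) ⬝ᵥ x = 0) : 0 ≤ r := by
  have h1 := horth |r| (hK r hr)
  have h2 := horth r hr
  have h3 : d ⬝ᵥ r ≤ d ⬝ᵥ |r| :=
    Finset.sum_le_sum fun i _ => mul_le_mul_of_nonneg_left (le_abs_self (r i)) (hd i)
  have h4 : r ⬝ᵥ r = |r| ⬝ᵥ |r| :=
    Finset.sum_congr rfl fun i _ => (abs_mul_abs_self (r i)).symm
  have hterm : ∀ i, 0 ≤ (|r| - r) i * |r| i := fun i =>
    mul_nonneg (sub_nonneg.2 (le_abs_self (r i))) (abs_nonneg (r i))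
  have hgap : (|r| - r) ⬝ᵥ |r| = 0 := by
    refine le_antisymm ?_ (Finset.sum_nonneg fun i _ => hterm i)
    rw [sub_dotProduct] at h1 h2 ⊢
    linarith
  intro i
  have hi := (Finset.sum_eq_zero_iff_of_nonneg fun i _ => hterm i).1 hgap i (Finset.mem_univ i)
  simp only [Pi.sub_apply, Pi.abs_apply] at hi
  show 0 ≤ r i
  by_contra hneg
  rw [abs_of_neg (not_le.1 hneg)] at hi
  nlinarith [not_le.1 hneg]

theorem Matrix.exists_mulVec_eq_zero_of_sum_col_eq_zero {ι R : Type*} [Fintype ι] [DecidableEq ι]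
    [CommRing R] [IsDomain R] (N : Matrix ι ι R) {S : Finset ι} (hS : S.Nonempty)
    (hcol : ∀ b ∈ S, ∑ a ∈ S, N a b = 0) (hN : ∀ a b, a ∉ S → b ∈ S → N a b = 0) :
    ∃ x : ι → R, x ≠ 0 ∧ (∀ a ∉ S, x a = 0) ∧ N *ᵥ x = 0 := by
  have : Nonempty S := hS.to_subtype
  set N' : Matrix S S R := N.submatrix (↑) (↑)
  have hdet : N'.det = 0 := by
    refine exists_vecMul_eq_zero_iff.1 ⟨1, one_ne_zero, funext fun b => ?_⟩
    simp only [N', vecMul, dotProduct, submatrix_apply, Pi.one_apply, one_mul, Pi.zero_apply]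
    exact (Finset.sum_coe_sort S (N · b)).trans (hcol b b.2)
  obtain ⟨v, hv0, hv⟩ := exists_mulVec_eq_zero_iff.2 hdet
  set x : ι → R := fun a => if h : a ∈ S then v ⟨a, h⟩ else 0
  have hxS (a : S) : x a = v a := dif_pos a.2
  refine ⟨x, fun hx => hv0 (funext fun a => ?_), fun a ha => dif_neg ha, funext fun a => ?_⟩
  · rw [← hxS, hx, Pi.zero_apply, Pi.zero_apply]
  have hsum : (N *ᵥ x) a = ∑ b : S, N a b * v b := by
    rw [mulVec, dotProduct,
      ← Finset.sum_subset (Finset.subset_univ S) fun b _ hb => by simp [x, hb],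
      ← Finset.sum_coe_sort S]
    simp only [hxS]
  by_cases ha : a ∈ S
  · rw [hsum]
    exact congrFun hv ⟨a, ha⟩
  · simp [hsum, hN a _ ha]

section Laplacian

variable {A : Matrix (Fin n) (Fin n) ℝ}

theorem inLap_mulVec_apply (x : Fin n → ℝ) (i : Fin n) :
    (inLap A *ᵥ x) i = indeg A i * x i - ∑ j, A i j * x j := by
  rw [inLap, sub_mulVec, Pi.sub_apply, mulVec_diagonal]
  rfl

theorem inLap_transpose_mulVec_apply (x : Fin n → ℝ) (i : Fin n) :
    ((inLap A)ᵀ *ᵥ x) i = indeg A i * x i - ∑ j, A j i * x j := by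
  rw [inLap, transpose_sub, diagonal_transpose, sub_mulVec, Pi.sub_apply, mulVec_diagonal]
  rfl

theorem sum_inLap_apply_left (b : Fin n) : ∑ a, inLap A a b = 0 := by
  simp [inLap, diagonal_apply, indeg]

theorem sum_inLap_mulVec (x : Fin n → ℝ) : ∑ i, (inLap A *ᵥ x) i = 0 := by
  simp only [mulVec, dotProduct]
  rw [Finset.sum_comm]
  simp [← Finset.sum_mul, sum_inLap_apply_left]

theorem totalWeight_eq_sum_indeg (A : Matrix (Fin n) (Fin n) ℝ) :
    totalWeight A = ∑ j, indeg A j :=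
  Finset.sum_comm

theorem indeg_nonneg (hA : ∀ i j, 0 ≤ A i j) (j : Fin n) : 0 ≤ indeg A j :=
  Finset.sum_nonneg fun i _ => hA i j

theorem indeg_mul_eq_sum_of_inLap_mulVec_eq_zero {x : Fin n → ℝ} (hx : inLap A *ᵥ x = 0)
    (i : Fin n) : indeg A i * x i = ∑ j, A i j * x j := by
  have := congrFun hx i
  rw [inLap_mulVec_apply, Pi.zero_apply] at this
  linarith

theorem inLap_mulVec_abs_eq_zero (hA : ∀ i j, 0 ≤ A i j) {x : Fin n → ℝ}
    (hx : inLap A *ᵥ x = 0) : inLap A *ᵥ |x| = 0 := by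
  have hle : ∀ i, (inLap A *ᵥ |x|) i ≤ 0 := fun i => by
    calc (inLap A *ᵥ |x|) i = |∑ j, A i j * x j| - ∑ j, A i j * |x j| := by
          simp only [inLap_mulVec_apply, Pi.abs_apply,
            ← indeg_mul_eq_sum_of_inLap_mulVec_eq_zero hx, abs_mul, abs_of_nonneg (indeg_nonneg hA i)]
      _ ≤ 0 := by
          refine sub_nonpos.2 ((Finset.abs_sum_le_sum_abs _ _).trans_eq ?_)
          simp only [abs_mul, abs_of_nonneg (hA i _)]
  funext i
  exact (Finset.sum_eq_zero_iff_of_nonpos fun i _ => hle i).1 (sum_inLap_mulVec _) i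
    (Finset.mem_univ i)

end Laplacian

section Projection

variable {A : Matrix (Fin n) (Fin n) ℝ}

theorem isProjKerL_indeg_sub_of_isFHL {g : Fin n → ℝ} (hg : IsFHL A g) :
    IsProjKerL A (indeg A - (inLap A)ᵀ *ᵥ g) := by
  have hnormal := (inLap A)ᵀ.transpose_mulVec_residual_eq_zero (indeg A) g hg
  rw [transpose_transpose] at hnormal
  refine ⟨by rw [← neg_sub, mulVec_neg, hnormal, neg_zero], fun x hx => ?_⟩
  change (indeg A - (indeg A - (inLap A)ᵀ *ᵥ g)) ⬝ᵥ x = 0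
  rw [sub_sub_cancel, mulVec_transpose, ← dotProduct_mulVec, hx, dotProduct_zero]

theorem IsProjKerL.nonneg (hA : ∀ i j, 0 ≤ A i j) {b : Fin n → ℝ} (hb : IsProjKerL A b) :
    0 ≤ b :=
  nonneg_of_sub_orthogonal (K := {x | inLap A *ᵥ x = 0})
    (fun _ hx => inLap_mulVec_abs_eq_zero hA hx) (fun j => indeg_nonneg hA j) hb.1 hb.2

theorem IsProjKerL.dotProduct_self {b : Fin n → ℝ} (hb : IsProjKerL A b) :
    b ⬝ᵥ b = indeg A ⬝ᵥ b := by
  have : (indeg A - b) ⬝ᵥ b = 0 := hb.2 b hb.1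
  rwa [sub_dotProduct, sub_eq_zero, eq_comm] at this

theorem etaF_eq_sum_indeg_sub_div (g : Fin n → ℝ) (hW : totalWeight A ≠ 0) :
    etaF A g = (∑ i, (indeg A - (inLap A)ᵀ *ᵥ g) i) / totalWeight A := by
  have hlevels : ∑ i, ∑ j, A i j * (g j - g i) = ∑ i, ((inLap A)ᵀ *ᵥ g) i := by
    simp only [inLap_transpose_mulVec_apply, indeg, mul_sub, Finset.sum_sub_distrib,
      Finset.sum_mul]
    congr 1 <;> exact Finset.sum_comm
  rw [etaF, hlevels]
  simp only [Pi.sub_apply]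
  rw [Finset.sum_sub_distrib, sub_div, ← totalWeight_eq_sum_indeg, div_self hW]

end Projection

section Reachability

variable {A : Matrix (Fin n) (Fin n) ℝ}

theorem indeg_mul_pos_of_edge (hA : ∀ i j, 0 ≤ A i j) {μ : Fin n → ℝ} (hμ0 : 0 ≤ μ)
    (hμ : inLap A *ᵥ μ = 0) {i j : Fin n} (hij : 0 < A i j) (hj : 0 < μ j) :
    0 < indeg A i * μ i := by
  rw [indeg_mul_eq_sum_of_inLap_mulVec_eq_zero hμ]
  exact (mul_pos hij hj).trans_le
    (Finset.single_le_sum (fun k _ => mul_nonneg (hA i k) (hμ0 k)) (Finset.mem_univ j))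

theorem pos_of_reaches (hA : ∀ i j, 0 ≤ A i j) {μ : Fin n → ℝ} (hμ0 : 0 ≤ μ)
    (hμ : inLap A *ᵥ μ = 0) {i j : Fin n} (hij : Reaches A i j) (hj : 0 < μ j) : 0 < μ i := by
  induction hij using Relation.ReflTransGen.head_induction_on with
  | refl => exact hj
  | head hik _ hk =>
    exact pos_of_mul_pos_right (indeg_mul_pos_of_edge hA hμ0 hμ hik hk) (indeg_nonneg hA _)

theorem indeg_mul_eq_zero_of_reaches (hA : ∀ i j, 0 ≤ A i j) {μ : Fin n → ℝ} (hμ0 : 0 ≤ μ)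
    (hμ : inLap A *ᵥ μ = 0) {i j : Fin n} (hi : indeg A i = 0) (hij : Reaches A i j) :
    indeg A j * μ j = 0 := by
  rcases hij.cases_head with rfl | ⟨k, hik, hkj⟩
  · rw [hi, zero_mul]
  · refine mul_eq_zero_of_right _ ((hμ0 j).eq_of_not_lt fun hj => ?_).symm
    have := indeg_mul_pos_of_edge hA hμ0 hμ hik (pos_of_reaches hA hμ0 hμ hkj hj)
    rw [hi, zero_mul] at this
    exact this.false

theorem SimplyForwardInfluenced.indeg_mul_eq_zero (hA : ∀ i j, 0 ≤ A i j)
    (hsfi : SimplyForwardInfluenced A) {μ : Fin n → ℝ} (hμ0 : 0 ≤ μ) (hμ : inLap A *ᵥ μ = 0)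
    (j : Fin n) :
    indeg A j * μ j = 0 := by
  by_cases hj : indeg A j = 0
  · rw [hj, zero_mul]
  obtain ⟨i, hi, hij⟩ := hsfi.2.2 j hj
  exact indeg_mul_eq_zero_of_reaches hA hμ0 hμ hi hij

end Reachability

section Sources

variable {A : Matrix (Fin n) (Fin n) ℝ}

theorem InClosed.inLap_apply_eq_zero {S : Finset (Fin n)} (hS : InClosed A S) {a b : Fin n}
    (ha : a ∉ S) (hb : b ∈ S) : inLap A a b = 0 := by
  have hab : a ≠ b := fun h => ha (h ▸ hb)
  simp [inLap, diagonal_apply_ne _ hab, hS a b ha hb]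

open Classical in
theorem inClosed_filter_not_reached (hA : ∀ i j, 0 ≤ A i j) :
    InClosed A {v | ¬∃ i, indeg A i = 0 ∧ Reaches A i v} := by
  intro a b ha hb
  simp only [Finset.mem_filter, Finset.mem_univ, true_and, not_not] at ha hb
  obtain ⟨i, hi, hia⟩ := ha
  by_contra hab
  exact hb ⟨i, hi, hia.tail (lt_of_le_of_ne (hA a b) (Ne.symm hab))⟩

theorem InClosed.exists_indeg_eq_zero (hA : ∀ i j, 0 ≤ A i j)
    (hperp : ∀ x, inLap A *ᵥ x = 0 → indeg A ⬝ᵥ x = 0) {S : Finset (Fin n)}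
    (hS : InClosed A S) (hne : S.Nonempty) : ∃ a ∈ S, indeg A a = 0 := by
  obtain ⟨x, hx0, hxS, hx⟩ := (inLap A).exists_mulVec_eq_zero_of_sum_col_eq_zero hne
    (fun b hb => by
      rw [Finset.sum_subset (Finset.subset_univ S) fun a _ ha => hS.inLap_apply_eq_zero ha hb]
      exact sum_inLap_apply_left b)
    (fun a b ha hb => hS.inLap_apply_eq_zero ha hb)
  obtain ⟨a, ha⟩ := Function.ne_iff.1 hx0
  have hterms := (Finset.sum_eq_zero_iff_of_nonneg fun i _ =>
    mul_nonneg (indeg_nonneg hA i) (abs_nonneg (x i))).1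
    (hperp |x| (inLap_mulVec_abs_eq_zero hA hx)) a (Finset.mem_univ a)
  refine ⟨a, not_not.1 fun haS => ha (hxS a haS), ?_⟩
  exact (mul_eq_zero.1 hterms).resolve_right (abs_ne_zero.2 ha)

open Classical in
theorem exists_indeg_eq_zero_reaches (hA : ∀ i j, 0 ≤ A i j)
    (hperp : ∀ x, inLap A *ᵥ x = 0 → indeg A ⬝ᵥ x = 0) (j : Fin n) :
    ∃ i, indeg A i = 0 ∧ Reaches A i j := by
  by_contra hj
  obtain ⟨a, ha, ha0⟩ := (inClosed_filter_not_reached hA).exists_indeg_eq_zero hA hperp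
    ⟨j, Finset.mem_filter.2 ⟨Finset.mem_univ j, hj⟩⟩
  exact (Finset.mem_filter.1 ha).2 ⟨a, ha0, Relation.ReflTransGen.refl⟩

theorem simplyForwardInfluenced_of_forall_indeg_dotProduct_eq_zero (hA : ∀ i j, 0 ≤ A i j)
    (hW : 0 < totalWeight A) (hperp : ∀ x, inLap A *ᵥ x = 0 → indeg A ⬝ᵥ x = 0) :
    SimplyForwardInfluenced A := by
  obtain ⟨j, hj⟩ : ∃ j, indeg A j ≠ 0 := by
    by_contra! h
    rw [totalWeight_eq_sum_indeg, Finset.sum_eq_zero fun j _ => h j] at hW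
    exact hW.false
  obtain ⟨i, hi, -⟩ := exists_indeg_eq_zero_reaches hA hperp j
  exact ⟨⟨i, hi⟩, ⟨j, hj⟩, fun k _ => exists_indeg_eq_zero_reaches hA hperp k⟩

end Sources

theorem stmt_12_general (A : Matrix (Fin n) (Fin n) ℝ)
    (hA : ∀ i j, 0 ≤ A i j) (hW : 0 < totalWeight A)
    (g : Fin n → ℝ) (hg : IsFHL A g) :
    0 ≤ etaF A g ∧ (etaF A g = 0 ↔ SimplyForwardInfluenced A) := by
  set b := indeg A - (inLap A)ᵀ *ᵥ g
  have hb : IsProjKerL A b := isProjKerL_indeg_sub_of_isFHL hg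
  have hb0 : 0 ≤ b := hb.nonneg hA
  rw [etaF_eq_sum_indeg_sub_div g hW.ne']
  refine ⟨div_nonneg (Finset.sum_nonneg fun i _ => hb0 i) hW.le, ?_⟩
  have hsum : ∑ i, b i = 0 ↔ b = 0 := by
    rw [Finset.sum_eq_zero_iff_of_nonneg fun i _ => hb0 i, funext_iff]
    simp
  rw [div_eq_zero_iff, or_iff_left hW.ne', hsum]
  constructor
  · intro hb_zero
    refine simplyForwardInfluenced_of_forall_indeg_dotProduct_eq_zero hA hW fun x hx => ?_
    simpa [hb_zero, dotProduct] using hb.2 x hx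
  · intro hsfi
    rw [← dotProduct_self_eq_zero, hb.dotProduct_self]
    exact Finset.sum_eq_zero fun j _ => hsfi.indeg_mul_eq_zero hA hb0 hb.1 j

theorem stmt_12 (hn : 0 < n) (A : Matrix (Fin n) (Fin n) ℝ)
    (hA : ∀ i j, 0 ≤ A i j) (hdiag : ∀ i, A i i = 0)
    (hwc : WeaklyConnected A) (hW : 0 < totalWeight A)
    (g : Fin n → ℝ) (hg : IsFHL A g) :
    0 ≤ etaF A g ∧ (etaF A g = 0 ↔ SimplyForwardInfluenced A) :=
  stmt_12_general A hA hW g hg
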